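/- Let |D| denote the maximal column height of D. Every box R_t ∩ C_k of T(∞) with t ≤ |D| is nonempty, every box R_t ∩ C_k of T(∞) with t > |D| + 1 is empty, and the entry r of any nonempty box R_t ∩ C_k of T(∞) is either the entry of b(S) for some right extremal column staircase S in D, or the entry of the box R_t ∩ C^t, where C^t is the rightmost column of D of height ≥ t and this box is right extremal in D relative to ℓ(D); when t = |D| + 1, only the first alternative can occur. -/

import Mathlib

open scoped Classical

/-- height of column `j` of the diagram (columns numbered from 1). -/
def hgt (c : List ℕ) (j : ℕ) : ℕ := c.getD (j - 1) 0

/-- number of boxes in the columns strictly to the left of column `j`. -/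
def off (c : List ℕ) (j : ℕ) : ℕ := (c.take (j - 1)).sum

/-- `(i, j)` (row `i`, column `j`) is a box of the diagram `D`. -/
def IsBox (c : List ℕ) (i j : ℕ) : Prop :=
  1 ≤ j ∧ j ≤ c.length ∧ 1 ≤ i ∧ i ≤ hgt c j

/-- the entry of the box `(i, j)` in the tableau `T`. -/
def Tentry (c : List ℕ) (i j : ℕ) : ℕ := off c j + i

/-- the column of the box of `D` carrying entry `m` in `T`. -/
noncomputable def colOf (c : List ℕ) (m : ℕ) : ℕ := sInf {j | m ≤ (c.take j).sum}

/-- the row of the box of `D` carrying entry `m` in `T`. -/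
noncomputable def rowOf (c : List ℕ) (m : ℕ) : ℕ := m - off c (colOf c m)

/-- the total order `≼` on entries: increasing down columns, then from right to left. -/
def ple (c : List ℕ) (a b : ℕ) : Prop :=
  colOf c b < colOf c a ∨ (colOf c a = colOf c b ∧ a ≤ b)

/-- the strict version of `≼`. -/
def plt (c : List ℕ) (a b : ℕ) : Prop :=
  colOf c b < colOf c a ∨ (colOf c a = colOf c b ∧ a < b)

/-- column `j` has a left neighbour in `D`. -/
def HasLeftNb (c : List ℕ) (j : ℕ) : Prop :=
  ∃ i, 1 ≤ i ∧ i < j ∧ hgt c i = hgt c j ∧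
    ∀ i', i < i' → i' < j → hgt c i' ≠ hgt c j

/-- the `j`-th column of the tableau `T`, rows to optional entries. -/
def Tcol (c : List ℕ) (j : ℕ) : ℕ → Option ℕ := fun i =>
  if 1 ≤ i ∧ i ≤ hgt c j then some (Tentry c i j) else none

/-- one step of the propagation rule building `T(∞)`: the entry (if any) in row `t`
of column `j - 1` of `T(∞)` (given by `prev`) is propagated into the partially
built column `j` (given by `cur`). -/
noncomputable def propStep (c : List ℕ) (j : ℕ) (prev : ℕ → Option ℕ)
    (cur : ℕ → Option ℕ) (t : ℕ) : ℕ → Option ℕ :=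
  match prev t with
  | none => cur
  | some l =>
    if hgt c j = t then
      if HasLeftNb c j ∧ cur (t + 1) = none then
        Function.update cur (t + 1) (some l)
      else cur
    else
      if cur t = none then Function.update cur t (some l) else cur

/-- the `j`-th column of the composition tableau `T(∞)`. -/
noncomputable def TinfCol (c : List ℕ) : ℕ → ℕ → Option ℕ
  | 0 => fun _ => none
  | 1 => Tcol c 1
  | j + 2 =>
      (List.range (c.sum + 2)).foldl
        (propStep c (j + 2) (TinfCol c (j + 1))) (Tcol c (j + 2))

/-- labels of lines: `1` or `∗`. -/
inductive Lab : Type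
  | one : Lab
  | star : Lab
deriving DecidableEq

/-- maximal height among the columns `1, …, j - 1`. -/
def maxHgt (c : List ℕ) (j : ℕ) : ℕ := (c.take (j - 1)).foldr max 0

/-- the maximal column height of the diagram `D`. -/
def maxH (c : List ℕ) : ℕ := c.foldr max 0

/-- `LineB c a i j lab` : the line family `ℓ(D)` contains a line labelled `lab`
whose left end-point is the box of `D` carrying entry `a` in `T` and whose right
end-point is the box `(i, j)` (row `i` of column `C_j`). -/
def LineB (c : List ℕ) (a i j : ℕ) (lab : Lab) : Prop :=
  2 ≤ j ∧ j ≤ c.length ∧ 1 ≤ i ∧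
    (match lab with
     | Lab.one =>
         (maxHgt c j < hgt c j ∧ i ≤ maxHgt c j + 1 ∧ TinfCol c (j - 1) i = some a)
       ∨ (hgt c j ≤ maxHgt c j ∧ i + 1 ≤ hgt c j ∧ TinfCol c (j - 1) i = some a)
       ∨ (hgt c j ≤ maxHgt c j ∧ i = hgt c j ∧
           ¬(∃ j', 1 ≤ j' ∧ j' < j ∧ hgt c j' = hgt c j) ∧
           TinfCol c (j - 1) i = some a)
       ∨ (hgt c j ≤ maxHgt c j ∧ i = hgt c j ∧
           (∃ j', 1 ≤ j' ∧ j' < j ∧ hgt c j' = hgt c j) ∧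
           TinfCol c (j - 1) (i + 1) = some a)
     | Lab.star =>
         hgt c j ≤ maxHgt c j ∧ i = hgt c j ∧
           (∃ j', 1 ≤ j' ∧ j' < j ∧ hgt c j' = hgt c j) ∧
           TinfCol c (j - 1) i = some a)

/-- `LineE c a b lab` : `ℓ(D)` contains a line labelled `lab` joining the box of `D`
carrying entry `a` in `T` (on the left) to the box carrying entry `b` (on the right). -/
def LineE (c : List ℕ) (a b : ℕ) (lab : Lab) : Prop :=
  ∃ i j, LineB c a i j lab ∧ b = Tentry c i j

/-- the box `(i, j)` of `D` is right extremal relative to `ℓ(D)`. -/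
def RExt (c : List ℕ) (i j : ℕ) : Prop :=
  IsBox c i j ∧ ∀ i' j', ¬ LineB c (Tentry c i j) i' j' Lab.one

/-- `c` is a composition of `n`. -/
def IsComposition (c : List ℕ) (n : ℕ) : Prop :=
  c.sum = n ∧ ∀ x ∈ c, 0 < x

/-- a column staircase `S^cc_u` (without the maximality requirement): `col j` is the
index of the column `C'_{i_j}` of height `j`, for `j ∈ [u, cc]`. -/
def IsStair (c : List ℕ) (u cc : ℕ) (col : ℕ → ℕ) : Prop :=
  1 ≤ u ∧ u ≤ cc ∧
  (∀ j, u ≤ j → j ≤ cc →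
     1 ≤ col j ∧ col j ≤ c.length ∧ hgt c (col j) = j ∧ HasLeftNb c (col j)) ∧
  (∀ j, u ≤ j → j < cc → col j < col (j + 1) ∧
     ∀ j', col j < j' → j' < col (j + 1) → hgt c j' < j)

/-- a column staircase `S^cc_u`: a maximal family as above. -/
def IsMaxStair (c : List ℕ) (u cc : ℕ) (col : ℕ → ℕ) : Prop :=
  IsStair c u cc col ∧
  ¬ ∃ u' cc' col', IsStair c u' cc' col' ∧ u' ≤ u ∧ cc ≤ cc' ∧ (u' < u ∨ cc < cc') ∧
      ∀ j, u ≤ j → j ≤ cc → col' j = col j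

/-- the column containing the box `b(S)`, where `cu` is the index of the lowest
(leftmost) column of the staircase `S` of height `u`: the rightmost column of
height `≥ u` strictly to the left of `cu`. -/
noncomputable def stairBoxCol (c : List ℕ) (u cu : ℕ) : ℕ :=
  sSup {j | j < cu ∧ u ≤ hgt c j}

/-- a right extremal column staircase of height `u` and depth `cc`. -/
def RExtStair (c : List ℕ) (u cc : ℕ) (col : ℕ → ℕ) : Prop :=
  IsMaxStair c u cc col ∧ ∀ j', col cc < j' → j' ≤ c.length → hgt c j' < cc


/-!
Column `j + 1` of `T(∞)` arises from column `j` by a closed rule (`nextCol`): with `h` the height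
of `C_{j+1}`, rows `1, …, h` carry the `T`-entries, row `h + 1` receives the entry of row `h` of
column `j` when `C_{j+1}` has a left neighbour, and the remaining rows are copied. So an entry of
`T` travels to the right along its row, drops by one row at each column of height equal to its
current row that has a left neighbour, and is lost at any other column reaching its row; in
particular the rows are filled exactly up to the largest height seen so far, plus possibly one.
An entry that reaches the last column without dropping sits in the rightmost column reaching its
row `t`, and no line labelled `1` can start at it: it only occurs in row `t` of `T(∞)`, and every
later column has height `< t` and, if of height `t - 1`, no left neighbour. An entry that dropped
from row `u` to row `cc + 1` traced a right extremal staircase `S^cc_u`, and the box `b(S)` is the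
entry's own box.
-/

section Diagram

variable {c : List ℕ}

lemma hgt_le_sum (c : List ℕ) (j : ℕ) : hgt c j ≤ c.sum := by
  unfold hgt
  rcases lt_or_ge (j - 1) c.length with h | h
  · rw [List.getD_eq_getElem c 0 h]
    exact List.le_sum_of_mem (List.getElem_mem h)
  · rw [List.getD_eq_default c 0 h]
    exact Nat.zero_le _

lemma one_le_hgt (hpos : ∀ x ∈ c, 0 < x) {j : ℕ} (h1 : 1 ≤ j) (h2 : j ≤ c.length) :
    1 ≤ hgt c j := by
  have hlt : j - 1 < c.length := by omega
  rw [hgt, List.getD_eq_getElem c 0 hlt]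
  exact hpos _ (List.getElem_mem hlt)

lemma off_add_two (c : List ℕ) (j : ℕ) : off c (j + 2) = off c (j + 1) + hgt c (j + 1) := by
  show (c.take (j + 1)).sum = (c.take j).sum + c.getD j 0
  rw [List.take_add_one, List.sum_append]
  rcases lt_or_ge j c.length with h | h
  · simp [List.getElem?_eq_getElem h]
  · simp [List.getElem?_eq_none h]

lemma maxHgt_add_two (c : List ℕ) (j : ℕ) :
    maxHgt c (j + 2) = max (maxHgt c (j + 1)) (hgt c (j + 1)) := by
  show (c.take (j + 1)).foldr max 0 = max ((c.take j).foldr max 0) (c.getD j 0)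
  have foldr_max_init (l : List ℕ) (a : ℕ) : l.foldr max a = max (l.foldr max 0) a := by
    induction l with
    | nil => simp
    | cons b l ih => simp only [List.foldr_cons, ih, max_assoc]
  rw [List.take_add_one, List.foldr_append]
  rcases lt_or_ge j c.length with h | h
  · simpa [List.getElem?_eq_getElem h] using foldr_max_init _ _
  · simp [List.getElem?_eq_none h]

lemma hgt_le_maxHgt {i j : ℕ} (h1 : 1 ≤ i) (h2 : i < j) : hgt c i ≤ maxHgt c j := by
  unfold hgt maxHgt
  rcases lt_or_ge (i - 1) c.length with h | h
  · rw [List.getD_eq_getElem c 0 h]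
    refine List.le_max_of_le' 0 (List.mem_take_iff_getElem.2 ⟨i - 1, ?_, rfl⟩) le_rfl
    omega
  · rw [List.getD_eq_default c 0 h]
    exact Nat.zero_le _

lemma maxHgt_le_sum (c : List ℕ) (j : ℕ) : maxHgt c j ≤ c.sum :=
  List.max_le_of_forall_le _ _ fun _ hx => List.le_sum_of_mem (List.mem_of_mem_take hx)

lemma maxHgt_length_succ (c : List ℕ) : maxHgt c (c.length + 1) = maxH c := by
  rw [maxHgt, Nat.add_sub_cancel, List.take_length, maxH]

lemma tentry_lt_tentry {t p t' p' : ℕ} (hp : 1 ≤ p) (ht : t ≤ hgt c p) (ht' : 1 ≤ t')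
    (hlt : p < p') : Tentry c t p < Tentry c t' p' := by
  obtain ⟨m, rfl⟩ : ∃ m, p = m + 1 := ⟨p - 1, by omega⟩
  have hoff : off c (m + 2) ≤ off c p' := List.monotone_sum_take c (by omega)
  have := off_add_two c m
  unfold Tentry
  omega

lemma tentry_inj {t p t' p' : ℕ} (h : IsBox c t p) (h' : IsBox c t' p')
    (he : Tentry c t p = Tentry c t' p') : t = t' ∧ p = p' := by
  rcases lt_trichotomy p p' with hlt | rfl | hlt
  · exact absurd he (tentry_lt_tentry h.1 h.2.2.2 h'.2.2.1 hlt).ne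
  · exact ⟨by simpa [Tentry] using he, rfl⟩
  · exact absurd he (tentry_lt_tentry h'.1 h'.2.2.2 h.2.2.1 hlt).ne'

lemma HasLeftNb.of_lt {x y : ℕ} (h1 : 1 ≤ y) (h2 : y < x) (h3 : hgt c y = hgt c x) :
    HasLeftNb c x := by
  let P : ℕ → Prop := fun z => 1 ≤ z ∧ hgt c z = hgt c x
  have hspec : P (Nat.findGreatest P (x - 1)) :=
    Nat.findGreatest_spec (m := y) (by omega) ⟨h1, h3⟩
  have hle : Nat.findGreatest P (x - 1) ≤ x - 1 := Nat.findGreatest_le _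
  refine ⟨_, hspec.1, by omega, hspec.2, fun i' hi1 hi2 hcon => ?_⟩
  exact Nat.findGreatest_is_greatest hi1 (by omega) ⟨by omega, hcon⟩

lemma HasLeftNb.hgt_le_maxHgt {x : ℕ} (h : HasLeftNb c x) : hgt c x ≤ maxHgt c x := by
  obtain ⟨y, hy1, hy2, hy3, -⟩ := h
  exact hy3 ▸ _root_.hgt_le_maxHgt hy1 hy2

end Diagram

noncomputable def nextCol (c : List ℕ) (j : ℕ) (prev : ℕ → Option ℕ) (i : ℕ) : Option ℕ :=
  if 1 ≤ i ∧ i ≤ hgt c j then some (Tentry c i j)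
  else if i = hgt c j + 1 ∧ HasLeftNb c j ∧ prev (hgt c j) ≠ none then prev (hgt c j)
  else prev i

section ColumnRecursion

variable {c : List ℕ} {j : ℕ} {prev : ℕ → Option ℕ}

lemma propStep_apply_of_ne {cur : ℕ → Option ℕ} {t i : ℕ} (h1 : i ≠ t) (h2 : i ≠ t + 1) :
    propStep c j prev cur t i = cur i := by
  unfold propStep
  rcases prev t with _ | l
  · rfl
  · dsimp only
    split_ifs <;> simp [h1, h2]

lemma propStep_apply_self (cur : ℕ → Option ℕ) (t : ℕ) :
    propStep c j prev cur t t =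
      if prev t ≠ none ∧ hgt c j ≠ t ∧ cur t = none then prev t else cur t := by
  unfold propStep
  rcases prev t with _ | l
  · simp
  · dsimp only
    split_ifs <;> simp_all

lemma propStep_apply_succ (cur : ℕ → Option ℕ) (t : ℕ) :
    propStep c j prev cur t (t + 1) =
      if prev t ≠ none ∧ hgt c j = t ∧ HasLeftNb c j ∧ cur (t + 1) = none then prev t
      else cur (t + 1) := by
  unfold propStep
  rcases prev t with _ | l
  · simp
  · dsimp only
    split_ifs <;> simp_all

/-- Invariant of the fold defining `TinfCol`: rows `< t` are final, and row `t` already holds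
the entry dropped into it from row `t - 1`, if any. -/
lemma foldl_propStep_range (hprev : prev 0 = none) (t : ℕ) :
    (List.range t).foldl (propStep c j prev) (Tcol c j) = fun i =>
      if i < t ∨ (i = t ∧ i = hgt c j + 1 ∧ HasLeftNb c j ∧ prev (hgt c j) ≠ none)
      then nextCol c j prev i else Tcol c j i := by
  induction t with
  | zero =>
    funext i
    rw [List.range_zero, List.foldl_nil, if_neg (by omega)]
  | succ t ih =>
    rw [List.range_succ, List.foldl_append, List.foldl_cons, List.foldl_nil, ih]
    funext i
    have ht : prev t ≠ none → 1 ≤ t := fun h =>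
      Nat.one_le_iff_ne_zero.2 fun h0 => h (h0 ▸ hprev)
    rcases (by omega : i < t ∨ i = t ∨ i = t + 1 ∨ t + 1 < i) with hi | rfl | rfl | hi
    · rw [propStep_apply_of_ne (by omega) (by omega), if_pos (by omega), if_pos (by omega)]
    · rw [propStep_apply_self]
      rcases eq_or_ne (prev i) none with hpi | hpi
      all_goals
        simp only [nextCol, Tcol]
        split_ifs <;> simp_all
    · rw [propStep_apply_succ]
      simp only [nextCol, Tcol]
      split_ifs <;> simp_all
    · rw [propStep_apply_of_ne (by omega) (by omega), if_neg (by omega), if_neg (by omega)]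

lemma foldl_propStep_eq_nextCol (hsupp : ∀ i, prev i ≠ none → 1 ≤ i ∧ i ≤ c.sum + 1) :
    (List.range (c.sum + 2)).foldl (propStep c j prev) (Tcol c j) = nextCol c j prev := by
  have hprev : prev 0 = none := by_contra fun h => by have := hsupp 0 h; omega
  rw [foldl_propStep_range hprev]
  funext i
  have := hgt_le_sum c j
  split_ifs with hi
  · rfl
  · have hnone : prev i = none := by_contra fun h => by have := hsupp i h; omega
    simp only [nextCol, Tcol, hnone]
    split_ifs <;> simp_all

lemma tinfCol_succ_of_support (hsupp : ∀ i, TinfCol c j i ≠ none → 1 ≤ i ∧ i ≤ c.sum + 1) :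
    TinfCol c (j + 1) = nextCol c (j + 1) (TinfCol c j) := by
  rcases j with _ | j
  · funext i
    simp [TinfCol, nextCol, Tcol]
  · exact foldl_propStep_eq_nextCol hsupp

variable (c) in
lemma tinfCol_support (j : ℕ) {i : ℕ} (h : TinfCol c j i ≠ none) :
    1 ≤ i ∧ i ≤ maxHgt c (j + 1) + 1 := by
  induction j generalizing i with
  | zero => exact absurd rfl h
  | succ j ih =>
    have hsupp : ∀ i, TinfCol c j i ≠ none → 1 ≤ i ∧ i ≤ c.sum + 1 := fun i hi => by
      have := ih hi
      have := maxHgt_le_sum c (j + 1)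
      omega
    rw [tinfCol_succ_of_support hsupp] at h
    rw [maxHgt_add_two]
    unfold nextCol at h
    split_ifs at h with h1 h2
    · omega
    · omega
    · have := ih h; omega

variable (c j) in
lemma tinfCol_succ : TinfCol c (j + 1) = nextCol c (j + 1) (TinfCol c j) :=
  tinfCol_succ_of_support fun _ hi => by
    have := tinfCol_support c j hi; have := maxHgt_le_sum c (j + 1); omega

lemma tinfCol_ne_none {i : ℕ} (h1 : 1 ≤ i) (h2 : i ≤ maxHgt c (j + 1)) :
    TinfCol c j i ≠ none := by
  induction j generalizing i with
  | zero => simp [maxHgt] at h2; omega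
  | succ j ih =>
    rw [maxHgt_add_two] at h2
    rw [tinfCol_succ]
    unfold nextCol
    split_ifs with hT hdrop
    · simp
    · exact hdrop.2.2
    · exact ih h1 (by omega)

end ColumnRecursion

/-- An entry in row `r` of column `x - 1` of `T(∞)` is copied to row `r` of column `x`. -/
def Passes (c : List ℕ) (r x : ℕ) : Prop :=
  hgt c x < r ∧ ¬(hgt c x + 1 = r ∧ HasLeftNb c x)

/-- The entry of the box `(t, p)` of `T` occupies row `r` of column `j` of `T(∞)`. -/
inductive Reaches (c : List ℕ) (p t : ℕ) : ℕ → ℕ → Prop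
  | refl : IsBox c t p → Reaches c p t p t
  | pass {j r : ℕ} : Reaches c p t j r → j + 1 ≤ c.length → Passes c r (j + 1) →
      Reaches c p t (j + 1) r
  | drop {j r : ℕ} : Reaches c p t j r → j + 1 ≤ c.length → hgt c (j + 1) = r →
      HasLeftNb c (j + 1) → Reaches c p t (j + 1) (r + 1)

namespace Reaches

variable {c : List ℕ} {p t j r : ℕ}

lemma isBox (h : Reaches c p t j r) : IsBox c t p := by
  induction h with
  | refl hb => exact hb
  | pass _ _ _ ih | drop _ _ _ _ ih => exact ih

lemma le_col (h : Reaches c p t j r) : p ≤ j := by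
  induction h <;> omega

lemma row_eq_of_passes (h : Reaches c p t j r) (hpass : ∀ x, p < x → x ≤ j → Passes c t x) :
    r = t := by
  induction h with
  | refl => rfl
  | pass h _ _ ih => exact ih fun x hx1 hx2 => hpass x hx1 (by omega)
  | drop h _ hh _ ih =>
    have hr := ih fun x hx1 hx2 => hpass x hx1 (by omega)
    have := (hpass _ (by have := h.le_col; omega) le_rfl).1
    omega

end Reaches

lemma exists_reaches_of_tinfCol_eq_some {c : List ℕ} (hpos : ∀ x ∈ c, 0 < x) {j i e : ℕ}
    (h : TinfCol c j i = some e) (hj : j ≤ c.length) :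
    ∃ p t, Reaches c p t j i ∧ e = Tentry c t p := by
  induction j generalizing i e with
  | zero => simp [TinfCol] at h
  | succ j ih =>
    rw [tinfCol_succ] at h
    unfold nextCol at h
    split_ifs at h with hT hdrop
    · exact ⟨j + 1, i, .refl ⟨by omega, hj, hT⟩, (Option.some_inj.1 h).symm⟩
    · obtain ⟨p, t, hr, rfl⟩ := ih h (by omega)
      exact ⟨p, t, hdrop.1 ▸ hr.drop hj rfl hdrop.2.1, rfl⟩
    · obtain ⟨p, t, hr, rfl⟩ := ih h (by omega)
      refine ⟨p, t, hr.pass hj ⟨?_, fun ⟨hrow, hnb⟩ => hdrop ⟨hrow.symm, hnb, ?_⟩⟩, rfl⟩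
      · have := (tinfCol_support c j (i := i) (by simp [h])).1
        omega
      · exact tinfCol_ne_none (one_le_hgt hpos (by omega) hj) hnb.hgt_le_maxHgt

lemma reaches_of_tinfCol_eq_tentry {c : List ℕ} (hpos : ∀ x ∈ c, 0 < x) {p t j i : ℕ}
    (hb : IsBox c t p) (h : TinfCol c j i = some (Tentry c t p)) (hj : j ≤ c.length) :
    Reaches c p t j i := by
  obtain ⟨p', t', hr, he⟩ := exists_reaches_of_tinfCol_eq_some hpos h hj
  obtain ⟨rfl, rfl⟩ := tentry_inj hb hr.isBox he
  exact hr

section Staircase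

variable {c : List ℕ}

lemma isStair_singleton {u x : ℕ} (hu : 1 ≤ u) (hx : 1 ≤ x) (hxlen : x ≤ c.length)
    (hh : hgt c x = u) (hnb : HasLeftNb c x) : IsStair c u u fun _ => x :=
  ⟨hu, le_rfl, fun _ _ _ => ⟨hx, hxlen, hh.trans (by omega), hnb⟩,
    fun _ _ h2 => absurd h2 (by omega)⟩

lemma IsStair.extend {u cc x : ℕ} {q : ℕ → ℕ} (hq : IsStair c u cc q) (hx : q cc < x)
    (hxlen : x ≤ c.length) (hh : hgt c x = cc + 1) (hnb : HasLeftNb c x)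
    (hbetween : ∀ y, q cc < y → y < x → hgt c y < cc) :
    IsStair c u (cc + 1) (Function.update q (cc + 1) x) := by
  obtain ⟨hu, hucc, hcols, hsteps⟩ := hq
  refine ⟨hu, by omega, fun s hs1 hs2 => ?_, fun s hs1 hs2 => ?_⟩
  · rcases (by omega : s ≤ cc ∨ s = cc + 1) with hs | rfl
    · rw [Function.update_of_ne (by omega)]
      exact hcols s hs1 hs
    · rw [Function.update_self]
      exact ⟨by have := (hcols cc hucc le_rfl).1; omega, hxlen, hh, hnb⟩
  · rcases (by omega : s < cc ∨ s = cc) with hs | rfl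
    · rw [Function.update_of_ne (by omega), Function.update_of_ne (by omega)]
      exact hsteps s hs1 hs
    · rw [Function.update_of_ne (by omega), Function.update_self]
      exact ⟨hx, hbetween⟩

/-- Either the entry never dropped, or the columns where it dropped form a staircase. -/
lemma Reaches.passes_or_stair {p t j r : ℕ} (h : Reaches c p t j r) :
    (r = t ∧ ∀ x, p < x → x ≤ j → Passes c t x) ∨
    ∃ cc q, r = cc + 1 ∧ IsStair c t cc q ∧ p < q t ∧ q cc ≤ j ∧
      (∀ x, p < x → x < q t → Passes c t x) ∧ ∀ x, q cc < x → x ≤ j → hgt c x < cc := by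
  induction h with
  | refl => exact .inl ⟨rfl, fun x h1 h2 => absurd h2 (by omega)⟩
  | @pass j r h hj hpass ih =>
    rcases ih with ⟨rfl, hstay⟩ | ⟨cc, q, rfl, hs, hpq, hqj, hbefore, hafter⟩
    · refine .inl ⟨rfl, fun x h1 h2 => ?_⟩
      rcases (by omega : x ≤ j ∨ x = j + 1) with hx | rfl
      · exact hstay x h1 hx
      · exact hpass
    · refine .inr ⟨cc, q, rfl, hs, hpq, by omega, hbefore, fun x h1 h2 => ?_⟩
      rcases (by omega : x ≤ j ∨ x = j + 1) with hx | rfl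
      · exact hafter x h1 hx
      · obtain ⟨hq1, -, hqh, -⟩ := hs.2.2.1 cc hs.2.1 le_rfl
        have hne : hgt c (j + 1) ≠ cc := fun he =>
          hpass.2 ⟨by omega, HasLeftNb.of_lt hq1 (by omega) (hqh.trans he.symm)⟩
        have := hpass.1
        omega
  | @drop j r h hj hh hnb ih =>
    rcases ih with ⟨rfl, hstay⟩ | ⟨cc, q, rfl, hs, hpq, hqj, hbefore, hafter⟩
    · have hp := h.le_col
      refine .inr ⟨r, fun _ => j + 1, rfl,
        isStair_singleton h.isBox.2.2.1 (by omega) hj hh hnb, by beta_reduce; omega, le_rfl,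
        fun x h1 h2 => hstay x h1 (by beta_reduce at h2; omega),
        fun x h1 h2 => absurd h2 (by beta_reduce at h1; omega)⟩
    · have ht : t ≠ cc + 1 := by have := hs.2.1; omega
      refine .inr ⟨cc + 1, Function.update q (cc + 1) (j + 1), rfl,
        hs.extend (by omega) hj hh hnb fun y h1 h2 => hafter y h1 (by omega), ?_, ?_, ?_,
        fun x h1 h2 => absurd h2 (by rw [Function.update_self] at h1; omega)⟩
      · rwa [Function.update_of_ne ht]
      · rw [Function.update_self]
      · rw [Function.update_of_ne ht]
        exact hbefore

lemma stairBoxCol_eq {u cu p : ℕ} (hp : p < cu) (hu : u ≤ hgt c p)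
    (hbetween : ∀ x, p < x → x < cu → hgt c x < u) : stairBoxCol c u cu = p :=
  IsGreatest.csSup_eq ⟨⟨hp, hu⟩, fun x ⟨hx1, hx2⟩ =>
    not_lt.1 fun hpx => (hbetween x hpx hx1).not_ge hx2⟩

lemma IsStair.rExtStair {p t cc : ℕ} {q : ℕ → ℕ} (hs : IsStair c t cc q) (ht : t ≤ hgt c p)
    (hpq : p < q t) (hbefore : ∀ x, p < x → x < q t → Passes c t x)
    (hafter : ∀ x, q cc < x → x ≤ c.length → hgt c x < cc) : RExtStair c t cc q := by
  refine ⟨⟨hs, ?_⟩, hafter⟩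
  have htcc := hs.2.1
  rintro ⟨u', cc', q', ⟨hu', -, hcols', hsteps'⟩, hut, hcc, hlt | hlt, hagree⟩
  · obtain ⟨s, rfl⟩ : ∃ s, t = s + 1 := ⟨t - 1, by omega⟩
    obtain ⟨-, -, hqh, hqnb⟩ := hcols' s (by omega) (by omega)
    obtain ⟨hlt', hbetween'⟩ := hsteps' s (by omega) (by omega)
    rw [hagree (s + 1) le_rfl htcc] at hlt' hbetween'
    rcases lt_trichotomy (q' s) p with hy | hy | hy
    · have := hbetween' p hy hpq
      omega
    · rw [hy] at hqh
      omega
    · exact (hbefore _ hy hlt').2 ⟨by omega, hqnb⟩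
  · obtain ⟨-, hlen, hqh, -⟩ := hcols' (cc + 1) (by omega) (by omega)
    obtain ⟨hlt', -⟩ := hsteps' cc (by omega) (by omega)
    rw [hagree cc htcc le_rfl] at hlt'
    have := hafter _ hlt' hlen
    omega

lemma rExt_of_passes (hpos : ∀ x ∈ c, 0 < x) {p t : ℕ} (hb : IsBox c t p)
    (hpass : ∀ x, p < x → x ≤ c.length → Passes c t x) : RExt c t p := by
  refine ⟨hb, fun i j hline => ?_⟩
  obtain ⟨hj2, hjlen, -, hcases⟩ := hline
  have occurs :
      ∀ i, TinfCol c (j - 1) i = some (Tentry c t p) → Passes c t j ∧ i = t ∧ p < j := by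
    intro i hi
    have hr := reaches_of_tinfCol_eq_tentry hpos hb hi (by omega)
    have := hr.le_col
    exact ⟨hpass j (by omega) hjlen,
      hr.row_eq_of_passes fun x h1 h2 => hpass x h1 (by omega), by omega⟩
  rcases hcases with ⟨hmax, -, hi⟩ | ⟨-, hle, hi⟩ | ⟨-, rfl, -, hi⟩ |
      ⟨-, rfl, ⟨y, hy1, hy2, hy3⟩, hi⟩
  · obtain ⟨hP, rfl, hpj⟩ := occurs _ hi
    exact hmax.not_ge (hP.1.le.trans (hb.2.2.2.trans (hgt_le_maxHgt hb.1 hpj)))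
  · obtain ⟨hP, rfl, -⟩ := occurs _ hi
    exact absurd hP.1 (by omega)
  · obtain ⟨hP, he, -⟩ := occurs _ hi
    exact hP.1.ne he
  · obtain ⟨hP, he, -⟩ := occurs _ hi
    exact hP.2 ⟨he, HasLeftNb.of_lt hy1 hy2 hy3⟩

end Staircase

theorem statement19_general (n : ℕ) (c : List ℕ) (hc : IsComposition c n) :
    (∀ t, 1 ≤ t → t ≤ maxH c → TinfCol c c.length t ≠ none) ∧
    (∀ t, maxH c + 1 < t → TinfCol c c.length t = none) ∧
    (∀ t r, 1 ≤ t → TinfCol c c.length t = some r →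
      ((∃ u cc col, RExtStair c u cc col ∧
          r = Tentry c u (stairBoxCol c u (col u))) ∨
        (t ≤ maxH c ∧ ∃ j, 1 ≤ j ∧ j ≤ c.length ∧ t ≤ hgt c j ∧
          (∀ j', j < j' → j' ≤ c.length → hgt c j' < t) ∧
          r = Tentry c t j ∧ RExt c t j))) := by
  refine ⟨fun t h1 h2 => tinfCol_ne_none h1 (by rwa [maxHgt_length_succ]), fun t ht => ?_,
    fun t r _ h => ?_⟩
  · by_contra hne
    have := tinfCol_support c c.length hne
    rw [maxHgt_length_succ] at this
    omega
  · obtain ⟨p, t0, hr, rfl⟩ := exists_reaches_of_tinfCol_eq_some hc.2 h le_rfl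
    have hb := hr.isBox
    rcases hr.passes_or_stair with ⟨rfl, hpass⟩ | ⟨cc, q, rfl, hs, hpq, -, hbefore, hafter⟩
    · refine .inr ⟨?_, p, hb.1, hb.2.1, hb.2.2.2, fun x h1 h2 => (hpass x h1 h2).1, rfl,
        rExt_of_passes hc.2 hb hpass⟩
      calc t ≤ hgt c p := hb.2.2.2
        _ ≤ maxH c := maxHgt_length_succ c ▸ hgt_le_maxHgt hb.1 (by have := hb.2.1; omega)
    · refine .inl ⟨t0, cc, q, hs.rExtStair hb.2.2.2 hpq hbefore hafter, ?_⟩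
      rw [stairBoxCol_eq hpq hb.2.2.2 fun x h1 h2 => (hbefore x h1 h2).1]

/-- every box `R_t ∩ C_k` of `T(∞)` with `t ≤ |D|` is nonempty, every
box `R_t ∩ C_k` with `t > |D| + 1` is empty, and the entry `r` of any nonempty box
`R_t ∩ C_k` of `T(∞)` is either the entry of `b(S)` for some right extremal column
staircase `S` in `D`, or the entry of the box `R_t ∩ C^t`, where `C^t` is the
rightmost column of `D` of height `≥ t` and this box is right extremal in `D`
relative to `ℓ(D)`; when `t = |D| + 1` only the first alternative can occur. -/
theorem statement19 (n : ℕ) (hn : 0 < n) (c : List ℕ) (hc : IsComposition c n)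
    (hk : 1 ≤ c.length) :
    (∀ t, 1 ≤ t → t ≤ maxH c → TinfCol c c.length t ≠ none) ∧
    (∀ t, maxH c + 1 < t → TinfCol c c.length t = none) ∧
    (∀ t r, 1 ≤ t → TinfCol c c.length t = some r →
      ((∃ u cc col, RExtStair c u cc col ∧
          r = Tentry c u (stairBoxCol c u (col u))) ∨
        (t ≤ maxH c ∧ ∃ j, 1 ≤ j ∧ j ≤ c.length ∧ t ≤ hgt c j ∧
          (∀ j', j < j' → j' ≤ c.length → hgt c j' < t) ∧
          r = Tentry c t j ∧ RExt c t j))) :=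
  statement19_general n c hc
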